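/- Along the deep linear gradient flow, the squared norm q(τ) = ‖P_Q w(τ)‖² of the component of w(τ) orthogonal to span(X) satisfies log(q(t)/q(0)) = ((N−1)/N)·log(‖w(t)‖²/‖w(0)‖²); consequently q(t)/‖w(t)‖² ≤ (‖w(0)‖/‖w(t)‖)^{2/N} whenever q(0) ≤ ‖w(0)‖². -/

import Mathlib

/-!
Statement 11: Along the deep linear gradient flow
∂w/∂τ = −‖w‖^{2(N−1)/N}(∇L¹(w) + (N−1)P_w∇L¹(w)), with ∇L¹(w) ∈ span(X) always,
the squared norm q(τ) = ‖P_Q w(τ)‖² of the component of w(τ) orthogonal to span(X)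
satisfies log(q(t)/q(0)) = ((N−1)/N)·log(‖w(t)‖²/‖w(0)‖²); consequently
q(t)/‖w(t)‖² ≤ (‖w(0)‖/‖w(t)‖)^{2/N} whenever q(0) ≤ ‖w(0)‖².
-/

open Real Matrix
open scoped RealInnerProductSpace

noncomputable section

abbrev E (d : ℕ) := EuclideanSpace ℝ (Fin d)

/-- Reinterpret a plain vector as a point of Euclidean space. -/
def toE {m : ℕ} (v : Fin m → ℝ) : EuclideanSpace ℝ (Fin m) := WithLp.toLp 2 v

/-- Elementary arithmetic step for the final inequality. -/
lemma aux_ineq {n A B C : ℝ} (hn : 0 < n) (h : A ≤ C) :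
    A + (n - 1) / n * (B - C) - B ≤ 1 / n * (C - B) := by
  have hn' : n ≠ 0 := ne_of_gt hn
  have h2 : n * (A + (n - 1) / n * (B - C) - B) ≤ n * (1 / n * (C - B)) := by
    have e1 : n * (A + (n - 1) / n * (B - C) - B) = n * A + (n - 1) * (B - C) - n * B := by
      field_simp
    have e2 : n * (1 / n * (C - B)) = C - B := by field_simp
    rw [e1, e2]
    nlinarith [mul_le_mul_of_nonneg_left h hn.le]
  exact le_of_mul_le_mul_left h2 hn

theorem orthogonal_component_growth {d n N : ℕ} (hN : 1 ≤ N)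
    (X : Matrix (Fin d) (Fin n) ℝ) (L1 : E d → ℝ)
    (V : Submodule ℝ (E d))
    (hV : V = Submodule.span ℝ (Set.range fun i => toE fun k => X k i))
    (hgrad : ∀ u : E d, gradient L1 u ∈ V)
    (w : ℝ → E d)
    (hflow : ∀ τ : ℝ, HasDerivAt w
      (-(‖w τ‖ ^ (2 * ((N : ℝ) - 1) / N) •
        (gradient L1 (w τ) + ((N : ℝ) - 1) •
          ((⟪w τ, gradient L1 (w τ)⟫ / ‖w τ‖ ^ 2) • w τ)))) τ)
    (hne : ∀ τ : ℝ, w τ ≠ 0)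
    (q : ℝ → ℝ) (hq : ∀ τ : ℝ, q τ = ‖(Vᗮ.orthogonalProjectionOnto (w τ) : E d)‖ ^ 2)
    (hqpos : ∀ τ : ℝ, 0 < q τ)
    (t : ℝ) (ht : 0 ≤ t) :
    Real.log (q t / q 0) = ((N : ℝ) - 1) / N * Real.log (‖w t‖ ^ 2 / ‖w 0‖ ^ 2) ∧
    (q 0 ≤ ‖w 0‖ ^ 2 → q t / ‖w t‖ ^ 2 ≤ (‖w 0‖ / ‖w t‖) ^ (2 / (N : ℝ))) := by
  classical
  have hNpos : (0 : ℝ) < (N : ℝ) := by exact_mod_cast Nat.lt_of_lt_of_le Nat.zero_lt_one hN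
  have hN0 : (N : ℝ) ≠ 0 := ne_of_gt hNpos
  -- the projection onto Vᗮ, as an endomorphism
  set P : E d →L[ℝ] E d := Vᗮ.subtypeL.comp (Vᗮ.orthogonalProjectionOnto) with hPdef
  have hPg : ∀ u : E d, P (gradient L1 u) = 0 := by
    intro u
    have h1 : gradient L1 u ∈ Vᗮᗮ := (Submodule.le_orthogonal_orthogonal V) (hgrad u)
    simp [hPdef, Submodule.orthogonalProjectionOnto_apply_of_mem_orthogonal h1]
  have hq' : ∀ τ, q τ = ⟪P (w τ), P (w τ)⟫ := by
    intro τ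
    rw [hq τ, real_inner_self_eq_norm_sq]
    rfl
  -- abbreviations
  set g : ℝ → E d := fun τ => gradient L1 (w τ) with hgdef
  set c : ℝ → ℝ := fun τ => ‖w τ‖ ^ (2 * ((N : ℝ) - 1) / N) with hcdef
  set a : ℝ → ℝ := fun τ => ⟪w τ, g τ⟫ / ‖w τ‖ ^ 2 with hadef
  have hrpos : ∀ τ, (0 : ℝ) < ‖w τ‖ ^ 2 := fun τ => pow_pos (norm_pos_iff.mpr (hne τ)) 2
  have hrne : ∀ τ, ‖w τ‖ ^ 2 ≠ 0 := fun τ => ne_of_gt (hrpos τ)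
  -- derivative of P ∘ w
  have hPw : ∀ τ, HasDerivAt (fun s => P (w s))
      (-((c τ * (((N : ℝ) - 1) * a τ)) • P (w τ))) τ := by
    intro τ
    have h1 := P.hasFDerivAt.comp_hasDerivAt τ (hflow τ)
    refine h1.congr_deriv (Eq.symm ?_)
    simp only [hcdef, hadef, hgdef]
    simp only [map_neg, ContinuousLinearMap.map_smul, map_add, hPg, zero_add, smul_smul]
  -- derivative of q
  have hqd : ∀ τ, HasDerivAt q
      (-(2 * c τ * (((N : ℝ) - 1) * a τ) * ⟪P (w τ), P (w τ)⟫)) τ := by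
    intro τ
    have h1 := HasDerivAt.inner ℝ (hPw τ) (hPw τ)
    have h2 : HasDerivAt (fun s => ⟪P (w s), P (w s)⟫)
        (-(2 * c τ * (((N : ℝ) - 1) * a τ) * ⟪P (w τ), P (w τ)⟫)) τ := by
      refine h1.congr_deriv (Eq.symm ?_)
      simp only [inner_neg_left, inner_neg_right, real_inner_smul_left, real_inner_smul_right]
      ring
    have hqe : q = fun s => ⟪P (w s), P (w s)⟫ := funext hq'
    rw [hqe]
    exact h2
  -- derivative of ‖w‖²
  have hrd : ∀ τ, HasDerivAt (fun s => ‖w s‖ ^ 2)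
      (-(2 * c τ * (N : ℝ) * ⟪w τ, g τ⟫)) τ := by
    intro τ
    have h1 := HasDerivAt.inner ℝ (hflow τ) (hflow τ)
    have hre : (fun s : ℝ => ‖w s‖ ^ 2) = fun s => ⟪w s, w s⟫ := by
      funext s; rw [real_inner_self_eq_norm_sq]
    rw [hre]
    refine h1.congr_deriv (Eq.symm ?_)
    simp only [hcdef, hadef, hgdef]
    simp only [inner_neg_left, inner_neg_right, real_inner_smul_left, real_inner_smul_right,
      inner_add_left, inner_add_right]
    rw [real_inner_comm (gradient L1 (w τ)) (w τ)]
    rw [show ⟪w τ, w τ⟫ = ‖w τ‖ ^ 2 from real_inner_self_eq_norm_sq (w τ)]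
    field_simp [hrne τ, norm_ne_zero_iff.mpr (hne τ)]
    ring
  -- the conserved quantity
  set κ : ℝ := ((N : ℝ) - 1) / N with hκdef
  set F : ℝ → ℝ := fun τ => Real.log (q τ) - κ * Real.log (‖w τ‖ ^ 2) with hFdef
  have hFd : ∀ τ, HasDerivAt F 0 τ := by
    intro τ
    have h1 := (hqd τ).log (ne_of_gt (hqpos τ))
    have h2 := ((hrd τ).log (hrne τ)).const_mul κ
    have h3 := h1.sub h2
    rw [hFdef]
    refine h3.congr_deriv (Eq.symm ?_)
    rw [← hq' τ]
    simp only [hκdef, hadef]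
    field_simp [ne_of_gt (hqpos τ), hrne τ, hN0]
    ring
  have hFconst : F t = F 0 :=
    is_const_of_deriv_eq_zero (fun τ => (hFd τ).differentiableAt)
      (fun τ => (hFd τ).deriv) t 0
  -- part 1
  have hlog1 : Real.log (q t) - Real.log (q 0) =
      κ * (Real.log (‖w t‖ ^ 2) - Real.log (‖w 0‖ ^ 2)) := by
    have h := hFconst
    simp only [hFdef] at h
    rw [mul_sub]
    linarith
  have part1 : Real.log (q t / q 0) = ((N : ℝ) - 1) / N * Real.log (‖w t‖ ^ 2 / ‖w 0‖ ^ 2) := by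
    rw [Real.log_div (ne_of_gt (hqpos t)) (ne_of_gt (hqpos 0)),
      Real.log_div (hrne t) (hrne 0), ← hκdef, hlog1]
  refine ⟨part1, fun h0 => ?_⟩
  -- part 2
  have hwt : (0 : ℝ) < ‖w t‖ := norm_pos_iff.mpr (hne t)
  have hw0 : (0 : ℝ) < ‖w 0‖ := norm_pos_iff.mpr (hne 0)
  have hbase : (0 : ℝ) < ‖w 0‖ / ‖w t‖ := div_pos hw0 hwt
  have hlhs : (0 : ℝ) < q t / ‖w t‖ ^ 2 := div_pos (hqpos t) (hrpos t)
  have hrhs : (0 : ℝ) < (‖w 0‖ / ‖w t‖) ^ (2 / (N : ℝ)) := Real.rpow_pos_of_pos hbase _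
  rw [← Real.log_le_log_iff hlhs hrhs]
  have hq0le : Real.log (q 0) ≤ Real.log (‖w 0‖ ^ 2) :=
    Real.log_le_log (hqpos 0) h0
  have key : Real.log (q t) - Real.log (‖w t‖ ^ 2) ≤
      1 / (N : ℝ) * (Real.log (‖w 0‖ ^ 2) - Real.log (‖w t‖ ^ 2)) := by
    have e1 : Real.log (q t) = Real.log (q 0) +
        κ * (Real.log (‖w t‖ ^ 2) - Real.log (‖w 0‖ ^ 2)) := by linarith [hlog1]
    rw [e1, hκdef]
    exact aux_ineq hNpos hq0le
  have eL : Real.log (q t / ‖w t‖ ^ 2) = Real.log (q t) - Real.log (‖w t‖ ^ 2) :=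
    Real.log_div (ne_of_gt (hqpos t)) (hrne t)
  have eR : Real.log ((‖w 0‖ / ‖w t‖) ^ (2 / (N : ℝ))) =
      1 / (N : ℝ) * (Real.log (‖w 0‖ ^ 2) - Real.log (‖w t‖ ^ 2)) := by
    rw [Real.log_rpow hbase, Real.log_div (ne_of_gt hw0) (ne_of_gt hwt),
      Real.log_pow, Real.log_pow]
    push_cast
    field_simp
  rw [eL, eR]
  exact key

end
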